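/- arXiv:2310.07231 — 2 statements merged into one kernel-verified Lean document; each statement's English description precedes it below -/
import Mathlib

section
/- Let ρ be an m-marked cycle shape with |ρ| ≤ n. Then |A_ρ(n)| = C(n − |ρ| + m₁(ρ), m₁(ρ)) · |A_{ρ̲ₙ}(n)|, where A_ρ(n) is the set of m-partial permutations of [n] with m-marked cycle type ρ, ρ̲ₙ is obtained from ρ by appending n − |ρ| cycles (∗), and m₁(ρ) is the number of cycles of ρ equal to (∗). -/
/-- An `m`-partial permutation (of ℕ): a finite domain `d` containing `[m] = {0,…,m-1}`
together with a permutation of `d`, encoded by its extension `σ` to `ℕ` which is the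
identity outside `d`. -/
structure MPP (m : ℕ) where
  d : Finset ℕ
  σ : Equiv.Perm ℕ
  range_sub : Finset.range m ⊆ d
  fix : ∀ x ∉ d, σ x = x

namespace MPP

variable {m : ℕ}

@[ext] theorem ext {p q : MPP m} (hd : p.d = q.d) (hσ : p.σ = q.σ) : p = q := by
  cases p; cases q; simp only [mk.injEq]; exact ⟨hd, hσ⟩

/-- The product of `m`-partial permutations: union of the domains, composition of the
extended permutations (restricted to the union). -/
instance : Monoid (MPP m) where
  mul p q := ⟨p.d ∪ q.d, p.σ * q.σ, p.range_sub.trans Finset.subset_union_left,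
    fun x hx => by
      have hq : x ∉ q.d := fun h => hx (Finset.mem_union_right _ h)
      have hp : x ∉ p.d := fun h => hx (Finset.mem_union_left _ h)
      simp [Equiv.Perm.mul_apply, q.fix x hq, p.fix x hp]⟩
  one := ⟨Finset.range m, 1, le_refl _, fun _ _ => rfl⟩
  mul_assoc p q r := ext (Finset.union_assoc _ _ _) (mul_assoc _ _ _)
  one_mul p := ext (Finset.union_eq_right.mpr p.range_sub) (one_mul _)
  mul_one p := ext (Finset.union_eq_left.mpr p.range_sub) (mul_one _)

@[simp] theorem mul_d (p q : MPP m) : (p * q).d = p.d ∪ q.d := rfl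
@[simp] theorem mul_σ (p q : MPP m) : (p * q).σ = p.σ * q.σ := rfl
@[simp] theorem one_d : (1 : MPP m).d = Finset.range m := rfl
@[simp] theorem one_σ : (1 : MPP m).σ = 1 := rfl

/-- Two `m`-partial permutations have the same `m`-marked cycle type iff there is a
relabelling of ℕ fixing `[m]` pointwise carrying one to the other. -/
def sameType (p q : MPP m) : Prop :=
  ∃ σ : Equiv.Perm ℕ, (∀ x < m, σ x = x) ∧ p.d.image σ = q.d ∧ σ * p.σ * σ⁻¹ = q.σ

/-- `m₁`: the number of trivial cycles `(∗)`, i.e. fixed points of the permutation lying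
in the domain but outside `[m]`. -/
def m1 (p : MPP m) : ℕ := ((p.d \ Finset.range m).filter (fun x => p.σ x = x)).card

/-- `p` padded with fixed points so that its domain becomes `[n]` (when `p.d ⊆ [n]`);
this realizes the shape `ρ̲ₙ`. -/
def padTo (n : ℕ) (p : MPP m) : MPP m :=
  ⟨p.d ∪ Finset.range n, p.σ, p.range_sub.trans Finset.subset_union_left,
   fun x hx => p.fix x fun h => hx (Finset.mem_union_left _ h)⟩

/-- `p` with `k` fresh fixed points adjoined to its domain; this realizes the shape `ρᵏ`. -/
def addFix (p : MPP m) (k : ℕ) : MPP m :=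
  ⟨p.d ∪ (Finset.range (p.d.sup id + 1 + k) \ Finset.range (p.d.sup id + 1)), p.σ,
   p.range_sub.trans Finset.subset_union_left,
   fun x hx => p.fix x fun h => hx (Finset.mem_union_left _ h)⟩

/-- A shape is proper when it has no cycle `(∗)`, i.e. no fixed point outside `[m]`. -/
def isProper (p : MPP m) : Prop := ∀ x ∈ p.d, m ≤ x → p.σ x ≠ x

/-- The subgroup `Stab_n(m)` of permutations of ℕ fixing `[m]` pointwise and fixing
everything outside `[n]` (i.e. `Stab_n(m) ≤ S_n`). -/
def StabN (m n : ℕ) : Subgroup (Equiv.Perm ℕ) where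
  carrier := {σ | (∀ x < m, σ x = x) ∧ (∀ x, n ≤ x → σ x = x)}
  one_mem' := ⟨fun _ _ => rfl, fun _ _ => rfl⟩
  mul_mem' := by
    rintro σ τ ⟨h1, h2⟩ ⟨h3, h4⟩
    exact ⟨fun x hx => by simp [Equiv.Perm.mul_apply, h3 x hx, h1 x hx],
           fun x hx => by simp [Equiv.Perm.mul_apply, h4 x hx, h2 x hx]⟩
  inv_mem' := by
    rintro σ ⟨h1, h2⟩
    refine ⟨fun x hx => ?_, fun x hx => ?_⟩
    · conv_lhs => rw [← h1 x hx]
      exact σ.symm_apply_apply x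
    · conv_lhs => rw [← h2 x hx]
      exact σ.symm_apply_apply x

/-- The conjugation action of `Stab_n(m)` on `m`-partial permutations:
`σ·(d,ω) = (σ(d), σ∘ω∘σ⁻¹)`. -/
def conjAct {n : ℕ} (σ : StabN m n) (p : MPP m) : MPP m :=
  ⟨p.d.image (σ : Equiv.Perm ℕ), (σ : Equiv.Perm ℕ) * p.σ * (σ : Equiv.Perm ℕ)⁻¹,
   fun x hx => Finset.mem_image.mpr
     ⟨x, p.range_sub hx, σ.2.1 x (Finset.mem_range.mp hx)⟩,
   fun x hx => by
     have h1 : (σ : Equiv.Perm ℕ)⁻¹ x ∉ p.d := fun h =>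
       hx (Finset.mem_image.mpr ⟨_, h, Equiv.apply_symm_apply _ x⟩)
     rw [Equiv.Perm.mul_apply, Equiv.Perm.mul_apply, p.fix _ h1]
     exact Equiv.apply_symm_apply _ x⟩

end MPP


namespace CCE

open Finset


lemma swap_image {a b : ℕ} (A : Finset ℕ) (ha : a ∈ A) (hb : b ∉ A) :
    A.image (Equiv.swap a b) = insert b (A.erase a) := by
  ext y
  simp only [Finset.mem_image, Finset.mem_insert, Finset.mem_erase]
  constructor
  · rintro ⟨x, hx, rfl⟩
    rcases eq_or_ne x a with rfl | hxa
    · left; rw [Equiv.swap_apply_left]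
    · have hxb : x ≠ b := fun h => hb (h ▸ hx)
      rw [Equiv.swap_apply_of_ne_of_ne hxa hxb]
      exact Or.inr ⟨hxa, hx⟩
  · rintro (rfl | ⟨hya, hy⟩)
    · exact ⟨a, ha, Equiv.swap_apply_left _ _⟩
    · refine ⟨y, hy, Equiv.swap_apply_of_ne_of_ne hya fun h => hb (h ▸ hy)⟩

lemma exists_perm_image : ∀ (k : ℕ) (A B : Finset ℕ), (A \ B).card = k → A.card = B.card →
    ∃ π : Equiv.Perm ℕ, (∀ x, x ∉ A ∪ B → π x = x) ∧ A.image π = B := by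
  intro k
  induction k with
  | zero =>
    intro A B h hc
    have hsub : A ⊆ B := by rwa [Finset.card_eq_zero, Finset.sdiff_eq_empty_iff_subset] at h
    have : A = B := Finset.eq_of_subset_of_card_le hsub hc.ge
    subst this
    exact ⟨1, fun _ _ => rfl, by simp⟩
  | succ k ih =>
    intro A B h hc
    obtain ⟨a, ha⟩ : (A \ B).Nonempty := by rw [← Finset.card_pos, h]; omega
    have haA : a ∈ A := (Finset.mem_sdiff.mp ha).1
    have haB : a ∉ B := (Finset.mem_sdiff.mp ha).2
    have hcomm : (B \ A).card = (A \ B).card := by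
      have h1 := Finset.card_sdiff_add_card_inter A B
      have h2 := Finset.card_sdiff_add_card_inter B A
      rw [Finset.inter_comm] at h2
      omega
    obtain ⟨b, hb⟩ : (B \ A).Nonempty := by rw [← Finset.card_pos, hcomm, h]; omega
    have hbB : b ∈ B := (Finset.mem_sdiff.mp hb).1
    have hbA : b ∉ A := (Finset.mem_sdiff.mp hb).2
    set A' := insert b (A.erase a) with hA'
    have hd : A' \ B = (A \ B).erase a := by
      ext x
      simp only [hA', Finset.mem_sdiff, Finset.mem_insert, Finset.mem_erase]
      constructor
      · rintro ⟨rfl | ⟨hxa, hx⟩, hxB⟩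
        · exact absurd hbB hxB
        · exact ⟨hxa, hx, hxB⟩
      · rintro ⟨hxa, hx, hxB⟩
        exact ⟨Or.inr ⟨hxa, hx⟩, hxB⟩
    have hcard' : A'.card = B.card := by
      have hbe : b ∉ A.erase a := fun h => hbA (Finset.mem_of_mem_erase h)
      rw [hA', Finset.card_insert_of_notMem hbe, Finset.card_erase_of_mem haA]
      have : 1 ≤ A.card := Finset.card_pos.mpr ⟨a, haA⟩
      omega
    have hdc : (A' \ B).card = k := by
      rw [hd, Finset.card_erase_of_mem ha, h]; omega
    obtain ⟨π', hπ'fix, hπ'img⟩ := ih A' B hdc hcard'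
    refine ⟨π' * Equiv.swap a b, ?_, ?_⟩
    · intro x hx
      have hxa : x ≠ a := fun h => hx (Finset.mem_union_left _ (h ▸ haA))
      have hxb : x ≠ b := fun h => hx (Finset.mem_union_right _ (h ▸ hbB))
      have hx' : x ∉ A' ∪ B := by
        intro hmem
        rcases Finset.mem_union.mp hmem with h1 | h1
        · rcases Finset.mem_insert.mp h1 with rfl | h2
          · exact hxb rfl
          · exact hx (Finset.mem_union_left _ (Finset.mem_of_mem_erase h2))
        · exact hx (Finset.mem_union_right _ h1)
      have : (Equiv.swap a b) x = x := Equiv.swap_apply_of_ne_of_ne hxa hxb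
      simp only [Equiv.Perm.mul_apply, this]
      exact hπ'fix x hx'
    · have : A.image ⇑(π' * Equiv.swap a b) = (A.image (Equiv.swap a b)).image π' := by
        rw [Finset.image_image]; rfl
      rw [this, swap_image A haA hbA, ← hA', hπ'img]

/-- Pointwise fixed image. -/
lemma image_eq_self {f : ℕ → ℕ} {s : Finset ℕ} (h : ∀ x ∈ s, f x = x) :
    s.image f = s := by
  rw [Finset.image_congr (g := id) (fun x hx => h x hx), Finset.image_id]

lemma mem_image_iff {σ : Equiv.Perm ℕ} {s t : Finset ℕ} (h : s.image σ = t) (x : ℕ) :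
    σ x ∈ t ↔ x ∈ s := by
  subst h
  rw [Finset.mem_image]
  constructor
  · rintro ⟨y, hy, hyx⟩
    rwa [← σ.injective hyx]
  · exact fun hx => ⟨x, hx, rfl⟩

lemma comm_apply {ρ c : Equiv.Perm ℕ} (h : ∀ x, c x ≠ x → ρ x = x) (x : ℕ) :
    c (ρ x) = ρ (c x) := by
  by_cases hcx : c x = x
  · rw [hcx]
    by_cases hcr : c (ρ x) = ρ x
    · rw [hcr]
    · have h1 : ρ (ρ x) = ρ x := h _ hcr
      have h2 : ρ x = x := ρ.injective h1
      rw [h2] at hcr ⊢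
      exact hcx
  · have h1 : ρ x = x := h _ hcx
    have h2 : c (c x) ≠ c x := fun hh => hcx (c.injective hh)
    have h3 : ρ (c x) = c x := h _ h2
    rw [h1, h3]

lemma conj_eq_self {ρ c : Equiv.Perm ℕ} (h : ∀ x, c x ≠ x → ρ x = x) :
    c * ρ * c⁻¹ = ρ := by
  ext x
  simp only [Equiv.Perm.mul_apply]
  rw [comm_apply h, show c (c⁻¹ x) = x from c.apply_symm_apply x]

variable {m n : ℕ}

lemma apply_mem {p : MPP m} {x : ℕ} (hx : x ∈ p.d) : p.σ x ∈ p.d := by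
  by_contra h
  have h1 : p.σ (p.σ x) = p.σ x := p.fix _ h
  have h2 : p.σ x = x := p.σ.injective h1
  rw [h2] at h
  exact h hx

lemma conj_apply {p q : MPP m} {σ : Equiv.Perm ℕ} (hc : σ * p.σ * σ⁻¹ = q.σ) (x : ℕ) :
    q.σ (σ x) = σ (p.σ x) := by
  rw [← hc]
  simp [Equiv.Perm.mul_apply]

lemma lt_m_iff {σ : Equiv.Perm ℕ} (hm : ∀ x < m, σ x = x) (x : ℕ) :
    σ x < m ↔ x < m := by
  constructor
  · intro h
    have := hm _ h
    have := σ.injective this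
    omega
  · intro h
    rw [hm x h]; exact h

/-- The set of fixed points in the domain outside `[m]`. -/
def fixD (m : ℕ) (p : MPP m) : Finset ℕ := (p.d \ Finset.range m).filter (fun x => p.σ x = x)

/-- The support inside `[n]`. -/
def suppN (n : ℕ) {m : ℕ} (p : MPP m) : Finset ℕ :=
  (Finset.range n).filter (fun x => p.σ x ≠ x)

lemma m1_eq (p : MPP m) : p.m1 = (fixD m p).card := rfl

lemma image_fixD {p q : MPP m} {σ : Equiv.Perm ℕ} (hm : ∀ x < m, σ x = x)
    (hd : p.d.image σ = q.d) (hc : σ * p.σ * σ⁻¹ = q.σ) :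
    (fixD m p).image σ = fixD m q := by
  ext y
  simp only [fixD, Finset.mem_image, Finset.mem_filter, Finset.mem_sdiff, Finset.mem_range]
  constructor
  · rintro ⟨x, ⟨⟨hxd, hxm⟩, hxf⟩, rfl⟩
    refine ⟨⟨(mem_image_iff hd x).mpr hxd, fun h => hxm ((lt_m_iff hm x).mp h)⟩, ?_⟩
    rw [conj_apply hc, hxf]
  · rintro ⟨⟨hyd, hym⟩, hyf⟩
    refine ⟨σ.symm y, ⟨⟨?_, ?_⟩, ?_⟩, σ.apply_symm_apply y⟩
    · have := (mem_image_iff hd (σ.symm y))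
      rw [σ.apply_symm_apply] at this
      exact this.mp hyd
    · intro h
      have := (lt_m_iff hm (σ.symm y)).mpr h
      rw [σ.apply_symm_apply] at this
      exact hym this
    · have h1 := conj_apply hc (σ.symm y)
      rw [σ.apply_symm_apply, hyf] at h1
      exact σ.injective (by rw [σ.apply_symm_apply]; exact h1.symm)

lemma image_suppN {p q : MPP m} {σ : Equiv.Perm ℕ}
    (hn : (Finset.range n).image σ = Finset.range n) (hc : σ * p.σ * σ⁻¹ = q.σ) :
    (suppN n p).image σ = suppN n q := by
  ext y
  simp only [suppN, Finset.mem_image, Finset.mem_filter]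
  constructor
  · rintro ⟨x, ⟨hxn, hxf⟩, rfl⟩
    refine ⟨(mem_image_iff hn x).mpr hxn, ?_⟩
    rw [conj_apply hc]
    exact fun h => hxf (σ.injective h)
  · rintro ⟨hyn, hyf⟩
    refine ⟨σ.symm y, ⟨?_, ?_⟩, σ.apply_symm_apply y⟩
    · have := (mem_image_iff hn (σ.symm y))
      rw [σ.apply_symm_apply] at this
      exact this.mp hyn
    · intro h
      have h1 := conj_apply hc (σ.symm y)
      rw [σ.apply_symm_apply, h, σ.apply_symm_apply] at h1
      exact hyf h1

lemma suppN_subset_d {p : MPP m} : suppN n p ⊆ p.d := by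
  intro x hx
  have := (Finset.mem_filter.mp hx).2
  by_contra h
  exact this (p.fix x h)

lemma decomp {p : MPP m} (hp : p.d ⊆ Finset.range n) :
    p.d = Finset.range m ∪ suppN n p ∪ fixD m p := by
  ext x
  simp only [Finset.mem_union, fixD, suppN, Finset.mem_filter, Finset.mem_sdiff]
  constructor
  · intro hx
    by_cases hm : x ∈ Finset.range m
    · exact Or.inl (Or.inl hm)
    · by_cases hf : p.σ x = x
      · exact Or.inr ⟨⟨hx, hm⟩, hf⟩
      · exact Or.inl (Or.inr ⟨hp hx, hf⟩)
  · rintro ((hx | ⟨hx, hf⟩) | ⟨⟨hx, _⟩, _⟩)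
    · exact p.range_sub hx
    · exact suppN_subset_d (Finset.mem_filter.mpr ⟨hx, hf⟩)
    · exact hx


section Main

open Finset

variable (m n : ℕ) (r : MPP m)

/-- The class of `p` with shape `r`. -/
abbrev PT := {p : MPP m // p.d ⊆ Finset.range n ∧ MPP.sameType r p}

/-- The class of `q` with shape `r.padTo n`. -/
abbrev QT := {q : MPP m // q.d ⊆ Finset.range n ∧ MPP.sameType (r.padTo n) q}

/-- Fixed points of `r.σ` in `[n] \ [m]`. -/
def TT : Finset ℕ := (Finset.range n \ Finset.range m).filter (fun x => r.σ x = x)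

/-- Subsets of `TT` of size `m1 r`. -/
abbrev FT := {F : Finset ℕ // F ⊆ TT m n r ∧ F.card = r.m1}

variable {m n r}

/-- A chosen conjugator from `r.padTo n` to `q`. -/
noncomputable def tau (q : QT m n r) : Equiv.Perm ℕ := q.2.2.choose

lemma pad_d {p : MPP m} (hp : p.d ⊆ Finset.range n) :
    (p.padTo n).d = Finset.range n := Finset.union_eq_right.mpr hp

lemma m_le_n (hr : r.d ⊆ Finset.range n) : m ≤ n :=
  Finset.range_subset_range.mp (r.range_sub.trans hr)

lemma tau_spec (hr : r.d ⊆ Finset.range n) (q : QT m n r) :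
    (∀ x < m, tau q x = x) ∧ (Finset.range n).image ⇑(tau q) = Finset.range n ∧
      tau q * r.σ * (tau q)⁻¹ = q.1.σ ∧ q.1.d = Finset.range n := by
  obtain ⟨h1, h2, h3⟩ := q.2.2.choose_spec
  have hd : (r.padTo n).d = Finset.range n := pad_d hr
  have h2' : (Finset.range n).image ⇑(tau q) = q.1.d :=
    (congrArg (fun s => Finset.image (⇑(tau q)) s) hd).symm.trans h2
  have hcn : q.1.d.card = n := by
    rw [← h2', Finset.card_image_of_injective _ (Equiv.injective _), Finset.card_range]
  have hcard : q.1.d = Finset.range n :=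
    Finset.eq_of_subset_of_card_le q.2.1 (by rw [hcn, Finset.card_range])
  exact ⟨h1, h2'.trans hcard, h3, hcard⟩

lemma fixD_sub_TT (hr : r.d ⊆ Finset.range n) : fixD m r ⊆ TT m n r := by
  intro x hx
  simp only [fixD, TT, Finset.mem_filter, Finset.mem_sdiff] at hx ⊢
  exact ⟨⟨hr hx.1.1, hx.1.2⟩, hx.2⟩

lemma fixD_pad (hr : r.d ⊆ Finset.range n) : fixD m (r.padTo n) = TT m n r := by
  unfold fixD TT
  rw [pad_d hr]
  rfl

lemma pad_sameType (hr : r.d ⊆ Finset.range n) {p : MPP m} (hp : p.d ⊆ Finset.range n)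
    (hs : MPP.sameType r p) : MPP.sameType (r.padTo n) (p.padTo n) := by
  obtain ⟨σ, h1, h2, h3⟩ := hs
  set A := Finset.range n \ r.d with hA
  set B := ((Finset.range n).image ⇑σ⁻¹) \ r.d with hB
  have hsub : r.d ⊆ (Finset.range n).image ⇑σ⁻¹ := by
    intro x hx
    have hxp : σ x ∈ p.d := (mem_image_iff h2 x).mpr hx
    exact Finset.mem_image.mpr ⟨σ x, hp hxp, by simp⟩
  have hcard : A.card = B.card := by
    have himg : ((Finset.range n).image ⇑σ⁻¹).card = n := by
      rw [Finset.card_image_of_injective _ (Equiv.injective _), Finset.card_range]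
    rw [hA, hB, Finset.card_sdiff_of_subset hr, Finset.card_sdiff_of_subset hsub, himg, Finset.card_range]
  obtain ⟨c, hcfix, hcimg⟩ := exists_perm_image (A \ B).card A B rfl hcard
  have hcrd : ∀ x ∈ r.d, c x = x := by
    intro x hx
    refine hcfix x ?_
    intro hmem
    rcases Finset.mem_union.mp hmem with h | h
    · exact (Finset.mem_sdiff.mp h).2 hx
    · exact (Finset.mem_sdiff.mp h).2 hx
  have hcomm : ∀ x, c x ≠ x → r.σ x = x := by
    intro x hcx
    by_contra h
    have hxd : x ∈ r.d := by
      by_contra hxd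
      exact h (r.fix x hxd)
    exact hcx (hcrd x hxd)
  refine ⟨σ * c, ?_, ?_, ?_⟩
  · intro x hx
    have hxd : x ∈ r.d := r.range_sub (Finset.mem_range.mpr hx)
    show σ (c x) = x
    rw [hcrd x hxd, h1 x hx]
  · rw [pad_d hr, pad_d hp]
    have h4 : Finset.range n = r.d ∪ A := by
      rw [hA, Finset.union_sdiff_of_subset hr]
    have h5 : (Finset.range n).image ⇑c = r.d ∪ B := by
      rw [h4, Finset.image_union, image_eq_self hcrd, hcimg]
    have h6 : r.d ∪ B = (Finset.range n).image ⇑σ⁻¹ := by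
      rw [hB, Finset.union_sdiff_of_subset hsub]
    have h7 : ⇑(σ * c) = ⇑σ ∘ ⇑c := rfl
    rw [h7, ← Finset.image_image, h5, h6, Finset.image_image]
    have : ⇑σ ∘ ⇑σ⁻¹ = id := by
      funext x; simp
    rw [this, Finset.image_id]
  · show σ * c * r.σ * (σ * c)⁻¹ = p.σ
    have hc3 : c * r.σ * c⁻¹ = r.σ := conj_eq_self hcomm
    calc σ * c * r.σ * (σ * c)⁻¹ = σ * (c * r.σ * c⁻¹) * σ⁻¹ := by group
      _ = σ * r.σ * σ⁻¹ := by rw [hc3]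
      _ = p.σ := h3

/-- The `Q`-component of the forward map. -/
noncomputable def fwdQ (hr : r.d ⊆ Finset.range n) (p : PT m n r) : QT m n r :=
  ⟨p.1.padTo n, by rw [pad_d p.2.1], pad_sameType hr p.2.1 p.2.2⟩

lemma fwd_hd (hr : r.d ⊆ Finset.range n) (p : PT m n r) :
    ((r.padTo n).d).image ⇑(tau (fwdQ hr p)) = (p.1.padTo n).d := by
  rw [pad_d hr, pad_d p.2.1]
  exact (tau_spec hr (fwdQ hr p)).2.1

lemma fwd_image_TT (hr : r.d ⊆ Finset.range n) (p : PT m n r) :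
    (TT m n r).image ⇑(tau (fwdQ hr p)) = fixD m (p.1.padTo n) := by
  rw [← fixD_pad hr]
  exact image_fixD (tau_spec hr (fwdQ hr p)).1 (fwd_hd hr p) (tau_spec hr (fwdQ hr p)).2.2.1

lemma fixD_sub_pad {p : MPP m} (_hp : p.d ⊆ Finset.range n) :
    fixD m p ⊆ fixD m (p.padTo n) := by
  intro x hx
  simp only [fixD, Finset.mem_filter, Finset.mem_sdiff, MPP.padTo] at hx ⊢
  exact Finset.mem_filter.mpr ⟨Finset.mem_sdiff.mpr ⟨Finset.mem_union_left _ hx.1.1, hx.1.2⟩, hx.2⟩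

lemma fwdF_sub (hr : r.d ⊆ Finset.range n) (p : PT m n r) :
    (fixD m p.1).image ⇑(tau (fwdQ hr p))⁻¹ ⊆ TT m n r := by
  intro y hy
  obtain ⟨x, hx, rfl⟩ := Finset.mem_image.mp hy
  have hx2 : x ∈ (TT m n r).image ⇑(tau (fwdQ hr p)) := by
    rw [fwd_image_TT hr p]
    exact fixD_sub_pad p.2.1 hx
  obtain ⟨z, hz, rfl⟩ := Finset.mem_image.mp hx2
  simpa using hz

lemma fwdF_card (hr : r.d ⊆ Finset.range n) (p : PT m n r) :
    ((fixD m p.1).image ⇑(tau (fwdQ hr p))⁻¹).card = r.m1 := by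
  rw [Finset.card_image_of_injective _ (Equiv.injective _)]
  obtain ⟨σ, h1, h2, h3⟩ := p.2.2
  rw [m1_eq, ← image_fixD h1 h2 h3, Finset.card_image_of_injective _ (Equiv.injective _)]

/-- The forward map. -/
noncomputable def fwd (hr : r.d ⊆ Finset.range n) (p : PT m n r) : FT m n r × QT m n r :=
  ⟨⟨(fixD m p.1).image ⇑(tau (fwdQ hr p))⁻¹, fwdF_sub hr p, fwdF_card hr p⟩, fwdQ hr p⟩

/-- The underlying MPP of the backward map. -/
noncomputable def bwdP (F : FT m n r) (q : QT m n r) : MPP m where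
  d := Finset.range m ∪ suppN n q.1 ∪ F.1.image ⇑(tau q)
  σ := q.1.σ
  range_sub := fun x hx => Finset.mem_union_left _ (Finset.mem_union_left _ hx)
  fix := by
    intro x hx
    by_cases hn : x ∈ Finset.range n
    · by_contra h
      exact hx (Finset.mem_union_left _ (Finset.mem_union_right _
        (Finset.mem_filter.mpr ⟨hn, h⟩)))
    · exact q.1.fix x (fun hh => hn (q.2.1 hh))

lemma TT_sub : TT m n r ⊆ Finset.range n \ Finset.range m := Finset.filter_subset _ _

lemma bwd_sub (hr : r.d ⊆ Finset.range n) (F : FT m n r) (q : QT m n r) :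
    (bwdP F q).d ⊆ Finset.range n := by
  refine Finset.union_subset (Finset.union_subset ?_ (Finset.filter_subset _ _)) ?_
  · exact Finset.range_subset_range.mpr (m_le_n hr)
  · intro y hy
    obtain ⟨x, hx, rfl⟩ := Finset.mem_image.mp hy
    have hxn : x ∈ Finset.range n := (Finset.mem_sdiff.mp (TT_sub (F.2.1 hx))).1
    exact (mem_image_iff (tau_spec hr q).2.1 x).mpr hxn

lemma bwd_sameType (hr : r.d ⊆ Finset.range n) (F : FT m n r) (q : QT m n r) :
    MPP.sameType r (bwdP F q) := by
  obtain ⟨h1, h2, h3, h4⟩ := tau_spec hr q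
  have hFcard : (fixD m r).card = F.1.card := by rw [F.2.2, m1_eq]
  obtain ⟨c, hcfix, hcimg⟩ := exists_perm_image _ (fixD m r) F.1 rfl hFcard
  have hmoved : ∀ x, c x ≠ x → x ∈ fixD m r ∪ F.1 := by
    intro x hcx
    by_contra h
    exact hcx (hcfix x h)
  have hcomm : ∀ x, c x ≠ x → r.σ x = x := by
    intro x hcx
    rcases Finset.mem_union.mp (hmoved x hcx) with h | h
    · exact (Finset.mem_filter.mp h).2
    · exact (Finset.mem_filter.mp (F.2.1 h)).2
  have hcm : ∀ x ∈ Finset.range m, c x = x := by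
    intro x hx
    by_contra hcx
    rcases Finset.mem_union.mp (hmoved x hcx) with h | h
    · exact (Finset.mem_sdiff.mp (Finset.mem_filter.mp h).1).2 hx
    · exact (Finset.mem_sdiff.mp (TT_sub (F.2.1 h))).2 hx
  have hcsupp : ∀ x ∈ suppN n r, c x = x := by
    intro x hx
    by_contra hcx
    exact (Finset.mem_filter.mp hx).2 (hcomm x hcx)
  refine ⟨tau q * c, ?_, ?_, ?_⟩
  · intro x hx
    show tau q (c x) = x
    rw [hcm x (Finset.mem_range.mpr hx), h1 x hx]
  · have h7 : ⇑(tau q * c) = ⇑(tau q) ∘ ⇑c := rfl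
    have hcd : r.d.image ⇑c = Finset.range m ∪ suppN n r ∪ F.1 := by
      have hu : (Finset.range m ∪ suppN n r ∪ fixD m r).image ⇑c =
          Finset.range m ∪ suppN n r ∪ F.1 := by
        rw [Finset.image_union, Finset.image_union, image_eq_self hcm,
          image_eq_self hcsupp, hcimg]
      rw [decomp hr]
      exact hu
    rw [h7, ← Finset.image_image, hcd, Finset.image_union, Finset.image_union,
      image_eq_self (fun x hx => h1 x (Finset.mem_range.mp hx)), image_suppN h2 h3]
    rfl
  · show tau q * c * r.σ * (tau q * c)⁻¹ = (bwdP F q).σ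
    have hc3 : c * r.σ * c⁻¹ = r.σ := conj_eq_self hcomm
    calc tau q * c * r.σ * (tau q * c)⁻¹
        = tau q * (c * r.σ * c⁻¹) * (tau q)⁻¹ := by group
      _ = tau q * r.σ * (tau q)⁻¹ := by rw [hc3]
      _ = q.1.σ := h3

/-- The backward map. -/
noncomputable def bwd (hr : r.d ⊆ Finset.range n) (x : FT m n r × QT m n r) : PT m n r :=
  ⟨bwdP x.1 x.2, bwd_sub hr x.1 x.2, bwd_sameType hr x.1 x.2⟩

lemma main_left_inv (hr : r.d ⊆ Finset.range n) (p : PT m n r) : bwd hr (fwd hr p) = p := by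
  apply Subtype.ext
  apply MPP.ext
  · show Finset.range m ∪ suppN n (p.1.padTo n) ∪
      ((fixD m p.1).image ⇑(tau (fwdQ hr p))⁻¹).image ⇑(tau (fwdQ hr p)) = p.1.d
    have h1 : suppN n (p.1.padTo n) = suppN n p.1 := rfl
    have h2 : ((fixD m p.1).image ⇑(tau (fwdQ hr p))⁻¹).image ⇑(tau (fwdQ hr p)) =
        fixD m p.1 := by
      rw [Finset.image_image]
      exact image_eq_self (fun x _ => by simp)
    rw [h2]
    exact (decomp p.2.1).symm
  · rfl


lemma fixD_bwd (hr : r.d ⊆ Finset.range n) (F : FT m n r) (q : QT m n r) :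
    fixD m (bwdP F q) = F.1.image ⇑(tau q) := by
  obtain ⟨h1, h2, h3, h4⟩ := tau_spec hr q
  ext x
  simp only [fixD, Finset.mem_filter, Finset.mem_sdiff]
  constructor
  · rintro ⟨⟨hxd, hxm⟩, hxf⟩
    rcases Finset.mem_union.mp hxd with h | h
    · rcases Finset.mem_union.mp h with h' | h'
      · exact absurd h' hxm
      · exact absurd hxf (Finset.mem_filter.mp h').2
    · exact h
  · intro hx
    obtain ⟨y, hy, rfl⟩ := Finset.mem_image.mp hx
    have hyT := F.2.1 hy
    have hyf : r.σ y = y := (Finset.mem_filter.mp hyT).2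
    have hym : y ∉ Finset.range m := (Finset.mem_sdiff.mp (TT_sub hyT)).2
    refine ⟨⟨Finset.mem_union_right _ hx, ?_⟩, ?_⟩
    · intro hmem
      have := (lt_m_iff h1 y).mp (Finset.mem_range.mp hmem)
      exact hym (Finset.mem_range.mpr this)
    · show (bwdP F q).σ ((tau q) y) = (tau q) y
      have := conj_apply (p := r) h3 y
      rw [hyf] at this
      exact this

lemma main_right_inv (hr : r.d ⊆ Finset.range n) (x : FT m n r × QT m n r) :
    fwd hr (bwd hr x) = x := by
  obtain ⟨F, q⟩ := x
  have hQ : fwdQ hr (bwd hr (F, q)) = q := by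
    apply Subtype.ext
    apply MPP.ext
    · show (bwdP F q).d ∪ Finset.range n = q.1.d
      rw [Finset.union_eq_right.mpr (bwd_sub hr F q), (tau_spec hr q).2.2.2]
    · rfl
  refine Prod.ext ?_ hQ
  apply Subtype.ext
  show (fixD m (bwdP F q)).image ⇑(tau (fwdQ hr (bwd hr (F, q))))⁻¹ = F.1
  rw [hQ, fixD_bwd hr F q, Finset.image_image]
  exact image_eq_self (fun x _ => by simp)

lemma TT_card (hr : r.d ⊆ Finset.range n) :
    (TT m n r).card = n - r.d.card + r.m1 := by
  classical
  have h1 := Finset.card_filter_add_card_filter_not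
    (s := Finset.range n \ Finset.range m) (p := fun x => r.σ x = x)
  have h2 := Finset.card_filter_add_card_filter_not
    (s := r.d \ Finset.range m) (p := fun x => r.σ x = x)
  have heq : (Finset.range n \ Finset.range m).filter (fun x => ¬ r.σ x = x) =
      (r.d \ Finset.range m).filter (fun x => ¬ r.σ x = x) := by
    ext x
    simp only [Finset.mem_filter, Finset.mem_sdiff]
    constructor
    · rintro ⟨⟨hn, hm⟩, hf⟩
      have hxd : x ∈ r.d := by
        by_contra h
        exact hf (r.fix x h)
      exact ⟨⟨hxd, hm⟩, hf⟩
    · rintro ⟨⟨hd, hm⟩, hf⟩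
      exact ⟨⟨hr hd, hm⟩, hf⟩
  have hc1 : (Finset.range n \ Finset.range m).card = n - m := by
    rw [Finset.card_sdiff_of_subset (Finset.range_subset_range.mpr (m_le_n hr)), Finset.card_range,
      Finset.card_range]
  have hc2 : (r.d \ Finset.range m).card = r.d.card - m := by
    rw [Finset.card_sdiff_of_subset r.range_sub, Finset.card_range]
  have hm1 : r.m1 = ((r.d \ Finset.range m).filter (fun x => r.σ x = x)).card := rfl
  have hmle : m ≤ r.d.card := by
    have := Finset.card_le_card r.range_sub
    rwa [Finset.card_range] at this
  have hnle : r.d.card ≤ n := by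
    have := Finset.card_le_card hr
    rwa [Finset.card_range] at this
  have hTT : (TT m n r).card =
      ((Finset.range n \ Finset.range m).filter (fun x => r.σ x = x)).card := rfl
  rw [heq, hc1] at h1
  rw [hc2] at h2
  omega

end Main

end CCE

/-- |A_ρ(n)| = C(n − |ρ| + m₁(ρ), m₁(ρ)) · |A_{ρ̲ₙ}(n)|.
The shape ρ is represented by an m-partial permutation `r` with `r.d ⊆ [n]`, and
`ρ̲ₙ` by `r.padTo n` (which has domain `[n]`). -/
theorem card_class_eq (m n : ℕ) (r : MPP m) (hr : r.d ⊆ Finset.range n) :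
    Nat.card {p : MPP m // p.d ⊆ Finset.range n ∧ MPP.sameType r p} =
      (n - r.d.card + r.m1).choose r.m1 *
        Nat.card {p : MPP m // p.d ⊆ Finset.range n ∧ MPP.sameType (r.padTo n) p} := by
  classical
  have e : {p : MPP m // p.d ⊆ Finset.range n ∧ MPP.sameType r p} ≃
      CCE.FT m n r × CCE.QT m n r :=
    ⟨CCE.fwd hr, CCE.bwd hr, CCE.main_left_inv hr, CCE.main_right_inv hr⟩
  rw [Nat.card_congr e, Nat.card_prod]
  congr 1
  have e2 : CCE.FT m n r ≃ {F // F ∈ (CCE.TT m n r).powersetCard r.m1} :=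
    Equiv.subtypeEquivRight (fun F => (Finset.mem_powersetCard).symm)
  rw [Nat.card_congr e2, Nat.card_eq_finsetCard, Finset.card_powersetCard,
    CCE.TT_card hr]
end

section
/- The m-class sums {K_λ : λ an m-marked cycle shape of size n} form a ℤ-basis of the m-centraliser algebra Z_{n,m} = {z ∈ ℤ[S_n] : τz = zτ for all τ ∈ Stab_n(m)}. -/
/-- Two permutations of [n] have the same m-marked cycle type iff they are conjugate
by a permutation fixing [m] = {0,…,m−1} pointwise. -/
def stabRel (m : ℕ) {n : ℕ} (u v : Equiv.Perm (Fin n)) : Prop :=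
  ∃ σ : Equiv.Perm (Fin n), (∀ x : Fin n, (x : ℕ) < m → σ x = x) ∧ σ * u * σ⁻¹ = v

/-- The m-centraliser algebra Z_{n,m}, as a ℤ-submodule of ℤ[S_n]. -/
noncomputable def Zc (m n : ℕ) : Submodule ℤ (MonoidAlgebra ℤ (Equiv.Perm (Fin n))) where
  carrier := {z | ∀ τ : Equiv.Perm (Fin n), (∀ x : Fin n, (x : ℕ) < m → τ x = x) →
    MonoidAlgebra.single τ (1 : ℤ) * z = z * MonoidAlgebra.single τ (1 : ℤ)}
  add_mem' := by
    intro a b ha hb τ hτ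
    rw [mul_add, add_mul, ha τ hτ, hb τ hτ]
  zero_mem' := by intro τ hτ; simp
  smul_mem' := by
    intro c a ha τ hτ
    rw [mul_smul_comm, smul_mul_assoc, ha τ hτ]

open scoped Classical in
/-- The m-class sum K_λ, where the m-marked cycle shape λ is represented by a
permutation u of [n]. -/
noncomputable def Ksum (m : ℕ) {n : ℕ} (u : Equiv.Perm (Fin n)) :
    MonoidAlgebra ℤ (Equiv.Perm (Fin n)) :=
  ∑ v : Equiv.Perm (Fin n), if stabRel m u v then MonoidAlgebra.single v (1 : ℤ) else 0


section Helpers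
variable {n : ℕ} {m : ℕ}

lemma fix_mul {σ τ : Equiv.Perm (Fin n)} (hσ : ∀ x : Fin n, (x : ℕ) < m → σ x = x)
    (hτ : ∀ x : Fin n, (x : ℕ) < m → τ x = x) :
    ∀ x : Fin n, (x : ℕ) < m → (σ * τ) x = x := fun x hx => by
  simp [Equiv.Perm.mul_apply, hτ x hx, hσ x hx]

lemma fix_inv {τ : Equiv.Perm (Fin n)} (hτ : ∀ x : Fin n, (x : ℕ) < m → τ x = x) :
    ∀ x : Fin n, (x : ℕ) < m → τ⁻¹ x = x := fun x hx => by
  conv_lhs => rw [← hτ x hx]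
  simp

lemma stabRel_refl (u : Equiv.Perm (Fin n)) : stabRel m u u :=
  ⟨1, by simp, by simp⟩

lemma stabRel_symm {u v : Equiv.Perm (Fin n)} : stabRel m u v → stabRel m v u := by
  rintro ⟨σ, hσ, rfl⟩
  exact ⟨σ⁻¹, fix_inv hσ, by group⟩

lemma stabRel_trans {u v w : Equiv.Perm (Fin n)} :
    stabRel m u v → stabRel m v w → stabRel m u w := by
  rintro ⟨σ, hσ, rfl⟩ ⟨τ, hτ, rfl⟩
  exact ⟨τ * σ, fix_mul hτ hσ, by group⟩

open scoped Classical in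
lemma Ksum_apply (u w : Equiv.Perm (Fin n)) :
    (Ksum m u).coeff w = if stabRel m u w then 1 else 0 := by
  classical
  rw [Ksum, MonoidAlgebra.coeff_sum, Finsupp.finset_sum_apply]
  rw [Finset.sum_congr rfl (fun v _ => by
    by_cases hv : v = w
    · subst hv
      by_cases hs : stabRel m u v <;> simp [hs, MonoidAlgebra.single_apply, MonoidAlgebra.coeff_single, Finsupp.single_apply]
    · by_cases hs : stabRel m u v <;>
        simp [hs, MonoidAlgebra.single_apply, hv, MonoidAlgebra.coeff_single, Finsupp.single_apply]
    : ∀ v ∈ Finset.univ, _ = if v = w then (if stabRel m u w then (1:ℤ) else 0) else 0)]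
  simp

lemma mem_Zc_iff {z : MonoidAlgebra ℤ (Equiv.Perm (Fin n))} :
    z ∈ Zc m n ↔ ∀ τ : Equiv.Perm (Fin n), (∀ x : Fin n, (x : ℕ) < m → τ x = x) →
      ∀ g : Equiv.Perm (Fin n), z.coeff (τ⁻¹ * g) = z.coeff (g * τ⁻¹) := by
  constructor
  · intro hz τ hτ g
    have h1 := congrArg (fun f : MonoidAlgebra ℤ (Equiv.Perm (Fin n)) => f.coeff g) (hz τ hτ)
    beta_reduce at h1
    rwa [MonoidAlgebra.single_mul_apply, MonoidAlgebra.mul_single_apply,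
      one_mul, mul_one] at h1
  · intro hz τ hτ
    ext g
    rw [MonoidAlgebra.single_mul_apply, MonoidAlgebra.mul_single_apply,
      one_mul, mul_one]
    exact hz τ hτ g

lemma Ksum_mem_Zc (u : Equiv.Perm (Fin n)) : Ksum m u ∈ Zc m n := by
  rw [mem_Zc_iff]
  intro τ hτ g
  rw [Ksum_apply, Ksum_apply]
  have hiff : stabRel m (g * τ⁻¹) (τ⁻¹ * g) :=
    ⟨τ⁻¹, fix_inv hτ, by group⟩
  by_cases hs : stabRel m u (g * τ⁻¹)
  · rw [if_pos hs, if_pos (stabRel_trans hs hiff)]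
  · rw [if_neg hs, if_neg (fun hc => hs (stabRel_trans hc (stabRel_symm hiff)))]

lemma Zc_const {z : MonoidAlgebra ℤ (Equiv.Perm (Fin n))} (hz : z ∈ Zc m n)
    {u w : Equiv.Perm (Fin n)} (huw : stabRel m u w) : z.coeff u = z.coeff w := by
  obtain ⟨σ, hσ, rfl⟩ := huw
  have := (mem_Zc_iff.mp hz) σ hσ (σ * u)
  rw [inv_mul_cancel_left] at this
  rw [this, mul_assoc]

end Helpers

/-- the m-class sums {K_λ : λ an m-marked cycle shape of size n} form a
ℤ-basis of the m-centraliser algebra Z_{n,m}. (R is a set of representatives of the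
m-marked cycle shapes of size n.) -/
theorem Ksum_basis (m n : ℕ) (h : m ≤ n) (R : Finset (Equiv.Perm (Fin n)))
    (hR1 : ∀ u ∈ R, ∀ v ∈ R, stabRel m u v → u = v)
    (hR2 : ∀ w : Equiv.Perm (Fin n), ∃ u ∈ R, stabRel m u w) :
    ∃ B : Module.Basis R ℤ (Zc m n),
      ∀ u : R, (↑(B u) : MonoidAlgebra ℤ (Equiv.Perm (Fin n))) =
        Ksum m (u : Equiv.Perm (Fin n)) := by
  classical
  set b : R → Zc m n := fun u => ⟨Ksum m (u : Equiv.Perm (Fin n)), Ksum_mem_Zc _⟩ with hb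
  have hbval : ∀ u : R, ((b u : Zc m n) : MonoidAlgebra ℤ (Equiv.Perm (Fin n)))
      = Ksum m (u : Equiv.Perm (Fin n)) := fun u => rfl
  have key : ∀ (s : Finset R) (g : R → ℤ) (w : Equiv.Perm (Fin n)),
      (∑ i ∈ s, g i • Ksum m (i : Equiv.Perm (Fin n))).coeff w
        = ∑ i ∈ s, (if stabRel m (i : Equiv.Perm (Fin n)) w then g i else 0) := by
    intro s g w
    rw [MonoidAlgebra.coeff_sum, Finsupp.finset_sum_apply]
    refine Finset.sum_congr rfl fun i _ => ?_
    rw [MonoidAlgebra.coeff_smul_apply, Ksum_apply]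
    by_cases hs : stabRel m (i : Equiv.Perm (Fin n)) w <;> simp [hs]
  have li : LinearIndependent ℤ b := by
    rw [linearIndependent_iff']
    intro s g hsum i hi
    have h2 : (∑ j ∈ s, g j • Ksum m (j : Equiv.Perm (Fin n))) = 0 := by
      have := congrArg (Submodule.subtype (Zc m n)) hsum
      simpa [b] using this
    have h3 := congrArg (fun f : MonoidAlgebra ℤ (Equiv.Perm (Fin n)) => f.coeff (i : Equiv.Perm (Fin n))) h2
    simp only [MonoidAlgebra.coeff_zero, Finsupp.coe_zero, Pi.zero_apply] at h3
    rw [key] at h3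
    rw [Finset.sum_eq_single i (fun j _ hj => by
        rw [if_neg]
        intro hc
        exact hj (Subtype.ext (hR1 _ j.2 _ i.2 hc))) (fun hc => absurd hi hc)] at h3
    rw [if_pos (stabRel_refl _)] at h3
    simpa using h3
  have sp : ⊤ ≤ Submodule.span ℤ (Set.range b) := by
    rintro ⟨z, hz⟩ -
    have hrep : (⟨z, hz⟩ : Zc m n) = ∑ u : R, z.coeff (u : Equiv.Perm (Fin n)) • b u := by
      apply Subtype.ext
      rw [Submodule.coe_sum]
      simp only [SetLike.val_smul, hbval]
      ext w
      rw [key Finset.univ (fun u => z.coeff (u : Equiv.Perm (Fin n))) w]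
      obtain ⟨u₀, hu₀R, hu₀⟩ := hR2 w
      rw [Finset.sum_eq_single (⟨u₀, hu₀R⟩ : R) (fun j _ hj => by
          rw [if_neg]
          intro hc
          exact hj (Subtype.ext (hR1 _ j.2 _ hu₀R
            (stabRel_trans hc (stabRel_symm hu₀))))) (by simp)]
      rw [if_pos hu₀]
      exact (Zc_const hz hu₀).symm
    rw [hrep]
    exact Submodule.sum_mem _ fun u _ =>
      Submodule.smul_mem _ _ (Submodule.subset_span ⟨u, rfl⟩)
  refine ⟨Module.Basis.mk li sp, fun u => ?_⟩
  rw [Module.Basis.mk_apply]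
end
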